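/- Let (Ω, 𝓕, μ) be a standard Borel probability space, T : Ω → ℝ measurable, E a standard Borel space, X : Ω → E measurable, Y : Ω → ℝ measurable, L > 0 fixed, t ∈ [0, L), and H : E → (ℝ → ℝ≥0) with (x,s) ↦ H(x)(s) jointly measurable. Assume (i) for (μ.map X)-almost every x, the regular conditional distribution of T given X = x is absolutely continuous with respect to Lebesgue measure with density u ↦ 1_{[0,∞)}(u) · H(x)(u) · exp(−∫₀ᵘ H(x)(s) ds); and (ii) strong ignorability: for every Borel set A ⊆ ℝ, the conditional expectation of the indicator of {min(T,t) ∈ A} given σ(Y) ⊔ σ(X) equals almost surely its conditional expectation given σ(X). Define the propensity process Θ_t : Ω → (ℝ → ℝ≥0) by Θ_t(ω)(s) = H(X(ω))(s) for s ∈ [0, t) and 0 otherwise. Then for every Borel set A ⊆ ℝ, the conditional expectation of the indicator of {min(T,t) ∈ A} given σ(Y) ⊔ σ(Θ_t) equals almost surely its conditional expectation given σ(Θ_t). -/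

import Mathlib

/-!
Under the hazard model the conditional law of `min T t` given `X` only sees the hazard `H X` on
`[0, t)`, i.e. the propensity process `Θ_t`: it has the hazard density on `(-∞, t)` and puts the
remaining mass at `t`. So `P(min T t ∈ A | X)` has a `σ(Θ_t)`-measurable version, and the tower
property carries ignorability from `σ(X)` down to the coarser `σ(Θ_t)`.

That version is not simply a functional of `Θ_t`: integrals over `u` of `Θ_t(u)` are not
measurable for the product σ-algebra on `ℝ → ℝ≥0`. Instead `Θ_t` is first averaged against the
conditional expectation kernel given `σ(Θ_t)`, which yields a jointly `σ(Θ_t) ⊗ 𝓑(ℝ)`-measurable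
process equal to `Θ_t` almost everywhere (Fubini).
-/

open MeasureTheory ProbabilityTheory Set Function
open scoped ENNReal NNReal

theorem Measurable.setIntegral_Ioc {α : Type*} [MeasurableSpace α] {F : α → ℝ → ℝ}
    (hF : Measurable (uncurry F)) {a b : α → ℝ} (ha : Measurable a) (hb : Measurable b) :
    Measurable fun x => ∫ s in Ioc (a x) (b x), F x s := by
  simp_rw [← integral_indicator measurableSet_Ioc]
  have hset : MeasurableSet {p : α × ℝ | p.2 ∈ Ioc (a p.1) (b p.1)} :=
    (measurableSet_lt (ha.comp measurable_fst) measurable_snd).inter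
      (measurableSet_le measurable_snd (hb.comp measurable_fst))
  have hind : Measurable fun p : α × ℝ => (Ioc (a p.1) (b p.1)).indicator (F p.1) p.2 := by
    simp_rw [indicator_apply]
    exact Measurable.ite hset hF measurable_const
  exact (hind.stronglyMeasurable.integral_prod_right' (ν := volume)).measurable

theorem Measurable.intervalIntegral {α : Type*} [MeasurableSpace α] {F : α → ℝ → ℝ}
    (hF : Measurable (uncurry F)) {a b : α → ℝ} (ha : Measurable a) (hb : Measurable b) :
    Measurable fun x => ∫ s in a x..b x, F x s :=
  (hF.setIntegral_Ioc ha hb).sub (hF.setIntegral_Ioc hb ha)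

noncomputable def hazardDensity (h : ℝ → ℝ) : ℝ → ℝ≥0∞ :=
  (Ici 0).indicator fun v => ENNReal.ofReal (h v * Real.exp (-∫ s in (0 : ℝ)..v, h s))

noncomputable def hazardMeasure (h : ℝ → ℝ) : Measure ℝ :=
  volume.withDensity (hazardDensity h)

theorem measurable_hazardDensity {α : Type*} {mα : MeasurableSpace α} {h : α → ℝ → ℝ}
    (hh : Measurable (uncurry h)) : Measurable (uncurry fun a => hazardDensity (h a)) := by
  have hint : Measurable fun p : α × ℝ => ∫ s in (0 : ℝ)..p.2, h p.1 s :=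
    Measurable.intervalIntegral (F := fun (p : α × ℝ) s => h p.1 s)
      (by exact hh.comp (measurable_fst.prodMap measurable_id)) measurable_const measurable_snd
  exact (Measurable.ite (measurable_snd measurableSet_Ici)
    (hh.mul hint.neg.exp).ennreal_ofReal measurable_const)

theorem Measurable.hazardMeasure {α : Type*} {mα : MeasurableSpace α} {h : α → ℝ → ℝ}
    (hh : Measurable (uncurry h)) : Measurable fun a => hazardMeasure (h a) := by
  convert (Kernel.withDensity (Kernel.const α volume) fun a => hazardDensity (h a)).measurable
  rw [Kernel.withDensity_apply _ (measurable_hazardDensity hh), Kernel.const_apply]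
  rfl

theorem hazardMeasure_restrict_Iio_congr {h h' : ℝ → ℝ} {t : ℝ}
    (hh : h =ᵐ[volume.restrict (Ico 0 t)] h') :
    (hazardMeasure h).restrict (Iio t) = (hazardMeasure h').restrict (Iio t) := by
  have hh' : ∀ᵐ u, u ∈ Ico 0 t → h u = h' u := (ae_restrict_iff' measurableSet_Ico).1 hh
  simp only [hazardMeasure, restrict_withDensity measurableSet_Iio]
  refine withDensity_congr_ae ?_
  filter_upwards [ae_restrict_mem measurableSet_Iio, ae_restrict_of_ae hh'] with u hut hu
  by_cases hu0 : 0 ≤ u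
  · have hint : ∫ s in (0 : ℝ)..u, h s = ∫ s in (0 : ℝ)..u, h' s := by
      refine intervalIntegral.integral_congr_ae ?_
      filter_upwards [hh'] with s hs hsu
      rw [uIoc_of_le hu0] at hsu
      exact hs ⟨hsu.1.le, hsu.2.trans_lt hut⟩
    simp [hazardDensity, hu0, hu ⟨hu0, hut⟩, hint]
  · simp [hazardDensity, hu0]

noncomputable def censoredProb (ν : Measure ℝ) (t : ℝ) (A : Set ℝ) : ℝ≥0∞ :=
  ν (A ∩ Iio t) + A.indicator 1 t * (1 - ν (Iio t))

theorem measure_preimage_min_eq_censoredProb (ν : Measure ℝ) [IsProbabilityMeasure ν] (t : ℝ)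
    (A : Set ℝ) : ν ((min · t) ⁻¹' A) = censoredProb ν t A := by
  by_cases htA : t ∈ A
  · have hpre : (min · t) ⁻¹' A = (A ∩ Iio t) ∪ Ici t := by
      ext u
      rcases lt_or_ge u t with hut | htu
      · simp [hut, hut.le, hut.not_ge]
      · simp [htu, htA]
    have hdisj : Disjoint (A ∩ Iio t) (Ici t) :=
      (Iio_disjoint_Ici le_rfl).mono_left inter_subset_right
    rw [hpre, measure_union hdisj measurableSet_Ici, ← compl_Iio,
      prob_compl_eq_one_sub measurableSet_Iio, censoredProb, indicator_of_mem htA, Pi.one_apply,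
      one_mul]
  · have hpre : (min · t) ⁻¹' A = A ∩ Iio t := by
      ext u
      rcases lt_or_ge u t with hut | htu
      · simp [hut, hut.le]
      · simp [htu, htA]
    rw [hpre, censoredProb, indicator_of_notMem htA, zero_mul, add_zero]

theorem censoredProb_congr {ν ν' : Measure ℝ} {t : ℝ}
    (h : ν.restrict (Iio t) = ν'.restrict (Iio t)) (A : Set ℝ) (hA : MeasurableSet A) :
    censoredProb ν t A = censoredProb ν' t A := by
  have hA' : ν (A ∩ Iio t) = ν' (A ∩ Iio t) := by
    rw [← Measure.restrict_apply hA, h, Measure.restrict_apply hA]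
  have hIio : ν (Iio t) = ν' (Iio t) := by
    rw [← Measure.restrict_apply_univ, h, Measure.restrict_apply_univ]
  rw [censoredProb, censoredProb, hA', hIio]

theorem measurable_censoredProb (t : ℝ) {A : Set ℝ} (hA : MeasurableSet A) :
    Measurable fun ν => censoredProb ν t A :=
  (Measure.measurable_coe (hA.inter measurableSet_Iio)).add
    (measurable_const.mul ((Measure.measurable_coe measurableSet_Iio).const_sub 1))

section CondExpKernel

variable {Ω : Type*} {m mΩ : MeasurableSpace Ω} [StandardBorelSpace Ω]
  {μ : Measure Ω} [IsFiniteMeasure μ]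

theorem ae_lintegral_condExpKernel_eq (hm : m ≤ mΩ) {f : Ω → ℝ≥0∞} (hf : Measurable[m] f) :
    ∀ᵐ ω ∂μ, ∫⁻ ω', f ω' ∂condExpKernel μ m ω = f ω := by
  have hdiag : ∀ᵐ p ∂(μ.trim hm ⊗ₘ condExpKernel μ m), f p.2 = f p.1 := by
    have hdiag_meas : Measurable[mΩ, m.prod mΩ] Function.diag :=
      (measurable_id'' hm).prodMk measurable_id
    have hset : MeasurableSet[m.prod mΩ] {p : Ω × Ω | f p.2 = f p.1} :=
      measurableSet_eq_fun (m := m.prod mΩ) ((hf.mono hm le_rfl).comp measurable_snd)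
        (hf.comp measurable_fst)
    rw [compProd_trim_condExpKernel hm, ae_iff,
      Measure.map_apply hdiag_meas (s := {p | ¬f p.2 = f p.1}) hset.compl]
    simp
  filter_upwards [ae_of_ae_trim hm (Measure.ae_ae_of_ae_compProd hdiag)] with ω hω
  rw [lintegral_congr_ae hω, lintegral_const, measure_univ, mul_one]

variable {β : Type*} {mβ : MeasurableSpace β}

theorem exists_measurable_uncurry_ae_ae_eq (hm : m ≤ mΩ) (ν : Measure β) [SFinite ν]
    {G : Ω → β → ℝ≥0∞} (hG : Measurable (uncurry G)) (hGm : ∀ b, Measurable[m] (G · b)) :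
    ∃ G' : Ω → β → ℝ≥0∞, Measurable[m.prod mβ] (uncurry G') ∧
      ∀ᵐ ω ∂μ, ∀ᵐ b ∂ν, G' ω b = G ω b := by
  set G' : Ω → β → ℝ≥0∞ := fun ω b => ∫⁻ ω', G ω' b ∂condExpKernel μ m ω
  have hG'm : Measurable[m.prod mβ] (uncurry G') := by
    have hfst : Measurable[m.prod mβ, m] (Prod.fst : Ω × β → Ω) := measurable_fst
    exact Measurable.lintegral_kernel_prod_right' (κ := (condExpKernel μ m).comap Prod.fst hfst)
      (f := fun q : (Ω × β) × Ω => G q.2 q.1.2)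
      (hG.comp (measurable_snd.prodMk (measurable_snd.comp measurable_fst)))
  refine ⟨G', hG'm, ?_⟩
  have hset : MeasurableSet {p : Ω × β | G' p.1 p.2 = G p.1 p.2} :=
    measurableSet_eq_fun (hG'm.mono (sup_le_sup (MeasurableSpace.comap_mono hm) le_rfl) le_rfl) hG
  rw [Measure.ae_ae_comm hset]
  exact ae_of_all _ fun b => ae_lintegral_condExpKernel_eq hm (hGm b)

end CondExpKernel

theorem exists_stronglyMeasurable_ae_eq_measureReal_preimage_min {Ω : Type*}
    [MeasurableSpace Ω] [StandardBorelSpace Ω] {μ : Measure Ω} [IsFiniteMeasure μ]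
    {Θ : Ω → ℝ → ℝ≥0} (hΘ : Measurable (uncurry Θ)) {ν : Ω → Measure ℝ}
    [∀ ω, IsProbabilityMeasure (ν ω)] {t : ℝ}
    (hν : ∀ᵐ ω ∂μ, (ν ω).restrict (Iio t) = (hazardMeasure fun s => Θ ω s).restrict (Iio t))
    {A : Set ℝ} (hA : MeasurableSet A) :
    ∃ W : Ω → ℝ, StronglyMeasurable[MeasurableSpace.comap Θ inferInstance] W ∧
      W =ᵐ[μ] fun ω => (ν ω).real ((min · t) ⁻¹' A) := by
  have hΘm : Measurable Θ := measurable_pi_lambda _ fun _ => hΘ.of_uncurry_right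
  obtain ⟨G, hGm, hG⟩ := exists_measurable_uncurry_ae_ae_eq (μ := μ) hΘm.comap_le volume
    (G := fun ω u => (Θ ω u : ℝ≥0∞)) (measurable_coe_nnreal_ennreal.comp hΘ)
    fun u => measurable_coe_nnreal_ennreal.comp ((measurable_pi_apply u).comp (comap_measurable Θ))
  refine ⟨fun ω => (censoredProb (hazardMeasure fun u => (G ω u).toReal) t A).toReal, ?_, ?_⟩
  · exact ((measurable_censoredProb t hA).comp (Measurable.hazardMeasure
      (mα := MeasurableSpace.comap Θ inferInstance) (h := fun ω u => (G ω u).toReal)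
      hGm.ennreal_toReal)).ennreal_toReal.stronglyMeasurable
  · filter_upwards [hG, hν] with ω hGω hνω
    rw [measureReal_def, measure_preimage_min_eq_censoredProb, censoredProb_congr hνω A hA]
    refine congrArg ENNReal.toReal (censoredProb_congr (hazardMeasure_restrict_Iio_congr
      (ae_restrict_of_ae ?_)) A hA)
    filter_upwards [hGω] with u hu
    rw [hu, ENNReal.coe_toReal]

theorem condExp_sup_ae_eq_condExp_of_le {Ω : Type*} {m₁ m₂ m₃ mΩ : MeasurableSpace Ω}
    {μ : Measure Ω} [IsFiniteMeasure μ] {f W : Ω → ℝ} (hm₁ : m₁ ≤ mΩ) (hm₂ : m₂ ≤ mΩ)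
    (h₃₂ : m₃ ≤ m₂) (hW : StronglyMeasurable[m₃] W) (hWf : W =ᵐ[μ] μ[f|m₂])
    (hf : μ[f|m₁ ⊔ m₂] =ᵐ[μ] μ[f|m₂]) :
    μ[f|m₁ ⊔ m₃] =ᵐ[μ] μ[f|m₃] := by
  have hWint : Integrable W μ := integrable_condExp.congr hWf.symm
  have hm₃ : m₃ ≤ mΩ := h₃₂.trans hm₂
  have h₁₃ : m₁ ⊔ m₃ ≤ m₁ ⊔ m₂ := sup_le_sup_left h₃₂ _
  calc μ[f|m₁ ⊔ m₃]
      =ᵐ[μ] μ[μ[f|m₁ ⊔ m₂]|m₁ ⊔ m₃] := (condExp_condExp_of_le h₁₃ (sup_le hm₁ hm₂)).symm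
    _ =ᵐ[μ] μ[W|m₁ ⊔ m₃] := condExp_congr_ae (hf.trans hWf.symm)
    _ = W := condExp_of_stronglyMeasurable (sup_le hm₁ hm₃) (hW.mono le_sup_right) hWint
    _ = μ[W|m₃] := (condExp_of_stronglyMeasurable hm₃ hW hWint).symm
    _ =ᵐ[μ] μ[μ[f|m₂]|m₃] := condExp_congr_ae hWf
    _ =ᵐ[μ] μ[f|m₃] := condExp_condExp_of_le h₃₂ hm₂

theorem condexp_indicator_given_propensityProcess_general
    {Ω E : Type*}
    [MeasurableSpace Ω] [StandardBorelSpace Ω]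
    [MeasurableSpace E]
    (μ : Measure Ω) [IsProbabilityMeasure μ]
    (T : Ω → ℝ) (X : Ω → E) (Y : Ω → ℝ)
    (hT : Measurable T) (hX : Measurable X) (hY : Measurable Y)
    (t : ℝ)
    (H : E → ℝ → NNReal) (hH : Measurable fun p : E × ℝ => H p.1 p.2)
    (hdens : ∀ᵐ x ∂(μ.map X), condDistrib T X μ x =
      volume.withDensity fun u : ℝ =>
        Set.indicator (Set.Ici (0 : ℝ))
          (fun v => ENNReal.ofReal
            ((H x v : ℝ) * Real.exp (-∫ s in (0 : ℝ)..v, (H x s : ℝ)))) u)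
    (h_ignorable : ∀ A : Set ℝ, MeasurableSet A →
      μ[Set.indicator ((fun ω => min (T ω) t) ⁻¹' A) (fun _ => (1 : ℝ)) |
          MeasurableSpace.comap Y inferInstance ⊔ MeasurableSpace.comap X inferInstance]
        =ᵐ[μ]
      μ[Set.indicator ((fun ω => min (T ω) t) ⁻¹' A) (fun _ => (1 : ℝ)) |
          MeasurableSpace.comap X inferInstance]) :
    ∀ A : Set ℝ, MeasurableSet A →
      μ[Set.indicator ((fun ω => min (T ω) t) ⁻¹' A) (fun _ => (1 : ℝ)) |
          MeasurableSpace.comap Y inferInstance ⊔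
            MeasurableSpace.comap
              (fun ω => fun s : ℝ => if s ∈ Set.Ico (0 : ℝ) t then H (X ω) s else 0)
              inferInstance]
        =ᵐ[μ]
      μ[Set.indicator ((fun ω => min (T ω) t) ⁻¹' A) (fun _ => (1 : ℝ)) |
          MeasurableSpace.comap
            (fun ω => fun s : ℝ => if s ∈ Set.Ico (0 : ℝ) t then H (X ω) s else 0)
            inferInstance] := by
  intro A hA
  set θ : E → ℝ → ℝ≥0 := fun x s => if s ∈ Ico (0 : ℝ) t then H x s else 0
  have hθ : Measurable (uncurry θ) :=
    Measurable.ite (measurable_snd measurableSet_Ico) hH measurable_const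
  have hΘX : MeasurableSpace.comap (θ ∘ X) inferInstance ≤ MeasurableSpace.comap X inferInstance :=
    ((measurable_pi_lambda _ fun _ => hθ.of_uncurry_right).comp (comap_measurable X)).comap_le
  have hlaw : ∀ᵐ ω ∂μ, (condDistrib T X μ (X ω)).restrict (Iio t)
      = (hazardMeasure fun s => θ (X ω) s).restrict (Iio t) := by
    filter_upwards [ae_of_ae_map hX.aemeasurable hdens] with ω hω
    rw [hω]
    refine hazardMeasure_restrict_Iio_congr (h := fun s => (H (X ω) s : ℝ)) ?_
    filter_upwards [ae_restrict_mem measurableSet_Ico] with u hu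
    simp only [θ, if_pos hu]
  obtain ⟨W, hWm, hW⟩ := exists_stronglyMeasurable_ae_eq_measureReal_preimage_min
    (Θ := θ ∘ X) (hθ.comp (hX.prodMap measurable_id)) hlaw hA
  exact condExp_sup_ae_eq_condExp_of_le hY.comap_le hX.comap_le hΘX hWm
    (hW.trans (condDistrib_ae_eq_condExp hX hT (measurable_id.min measurable_const hA)))
    (h_ignorable A hA)

/-- Theorem 1 (model-specific form): under the hazard model for treatment assignment and strong
ignorability given the covariate history `X`, treatment assignment restricted to time `t` is
strongly ignorable given the propensity process `Θ_t`: for every Borel set `A`, the conditional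
expectation of the indicator of `{min (T, t) ∈ A}` given `σ(Y) ⊔ σ(Θ_t)` equals a.s. its
conditional expectation given `σ(Θ_t)`. -/
theorem condexp_indicator_given_propensityProcess
    {Ω E : Type*}
    [MeasurableSpace Ω] [StandardBorelSpace Ω] [Nonempty Ω]
    [MeasurableSpace E] [StandardBorelSpace E]
    (μ : Measure Ω) [IsProbabilityMeasure μ]
    (T : Ω → ℝ) (X : Ω → E) (Y : Ω → ℝ)
    (hT : Measurable T) (hX : Measurable X) (hY : Measurable Y)
    (L : ℝ) (hL : 0 < L) (t : ℝ) (ht : t ∈ Set.Ico (0 : ℝ) L)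
    (H : E → ℝ → NNReal) (hH : Measurable fun p : E × ℝ => H p.1 p.2)
    (hdens : ∀ᵐ x ∂(μ.map X), condDistrib T X μ x =
      volume.withDensity fun u : ℝ =>
        Set.indicator (Set.Ici (0 : ℝ))
          (fun v => ENNReal.ofReal
            ((H x v : ℝ) * Real.exp (-∫ s in (0 : ℝ)..v, (H x s : ℝ)))) u)
    (h_ignorable : ∀ A : Set ℝ, MeasurableSet A →
      μ[Set.indicator ((fun ω => min (T ω) t) ⁻¹' A) (fun _ => (1 : ℝ)) |
          MeasurableSpace.comap Y inferInstance ⊔ MeasurableSpace.comap X inferInstance]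
        =ᵐ[μ]
      μ[Set.indicator ((fun ω => min (T ω) t) ⁻¹' A) (fun _ => (1 : ℝ)) |
          MeasurableSpace.comap X inferInstance]) :
    ∀ A : Set ℝ, MeasurableSet A →
      μ[Set.indicator ((fun ω => min (T ω) t) ⁻¹' A) (fun _ => (1 : ℝ)) |
          MeasurableSpace.comap Y inferInstance ⊔
            MeasurableSpace.comap
              (fun ω => fun s : ℝ => if s ∈ Set.Ico (0 : ℝ) t then H (X ω) s else 0)
              inferInstance]
        =ᵐ[μ]
      μ[Set.indicator ((fun ω => min (T ω) t) ⁻¹' A) (fun _ => (1 : ℝ)) |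
          MeasurableSpace.comap
            (fun ω => fun s : ℝ => if s ∈ Set.Ico (0 : ℝ) t then H (X ω) s else 0)
            inferInstance] :=
  condexp_indicator_given_propensityProcess_general μ T X Y hT hX hY t H hH hdens h_ignorable
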